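/- Let S be a finite state space, L ≥ 1, and for each 0 ≤ l ≤ L let p_l : S → ℝ be strictly positive with p_0 summing to 1 (a probability mass function). For 1 ≤ l ≤ L−1 let T_l : S × S → ℝ≥0 be a stochastic kernel (Σ_t T_l(s,t) = 1 for every s) satisfying detailed balance with respect to p_l. Then for every s ∈ S, Σ over all paths (s_1, …, s_{L−1}) ∈ S^{L−1} of p_0(s_1) · [Π_{l=1}^{L−1} T_l(s_l, s_{l+1})] · [Π_{l=1}^{L} p_l(s_l)/p_{l−1}(s_l)], where s_L := s, equals p_L(s). In other words, annealed importance sampling produces weighted samples whose weighted marginal on the final coordinate is exactly the target distribution p_L. -/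
import Mathlib


/-- The AIS path with intermediate states `q 0, …, q (L-2)` (playing the roles of
`s_1, …, s_{L-1}`) and final state `s` (playing the role of `s_L`): for
`1 ≤ l ≤ L - 1` it returns `q (l-1)` and for `l = L` it returns `s`. -/
def aisPath {S : Type*} (L : ℕ) (s : S) (q : Fin (L - 1) → S) : ℕ → S :=
  fun l => if h : l - 1 < L - 1 then q ⟨l - 1, h⟩ else s

lemma aisPath_self {S : Type*} (L : ℕ) (s : S) (q : Fin (L - 1) → S) :
    aisPath L s q L = s := by
  unfold aisPath
  rw [dif_neg (lt_irrefl _)]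

lemma aisPath_snoc_eq {S : Type*} {n : ℕ} (s t : S) (q' : Fin (n + 1 - 1) → S)
    (l : ℕ) (hl : l ≤ n + 1) :
    aisPath (n + 2) s (Fin.snoc (α := fun _ : Fin (n+1) => S) q' t) l
      = aisPath (n + 1) t q' l := by
  unfold aisPath
  rcases lt_or_ge (l - 1) n with h | h
  · rw [dif_pos (show l - 1 < n + 2 - 1 by omega), dif_pos (show l - 1 < n + 1 - 1 by omega)]
    have : (⟨l - 1, show l - 1 < n + 2 - 1 by omega⟩ : Fin (n+1))
        = Fin.castSucc ⟨l - 1, show l - 1 < n + 1 - 1 by omega⟩ := rfl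
    rw [this, Fin.snoc_castSucc]
  · have hln : l - 1 = n := by omega
    rw [dif_pos (show l - 1 < n + 2 - 1 by omega), dif_neg (show ¬ l - 1 < n + 1 - 1 by omega)]
    have : (⟨l - 1, show l - 1 < n + 2 - 1 by omega⟩ : Fin (n+1)) = Fin.last n := by
      ext; simpa using hln
    rw [this, Fin.snoc_last]

/-- Key auxiliary lemma: AIS weighted marginal, with `L = n + 1`. -/
lemma ais_aux {S : Type*} [Fintype S] [DecidableEq S] (n : ℕ)
    (p : ℕ → S → ℝ) (hp : ∀ l ≤ n + 1, ∀ s : S, 0 < p l s)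
    (T : ℕ → S → S → ℝ)
    (hTrow : ∀ l, 1 ≤ l → l ≤ n → ∀ s : S, ∑ t : S, T l s t = 1)
    (hdb : ∀ l, 1 ≤ l → l ≤ n → ∀ s t : S, p l s * T l s t = p l t * T l t s)
    (s : S) :
    ∑ q : Fin (n + 1 - 1) → S,
        (p 0 (aisPath (n + 1) s q 1) *
          (∏ l ∈ Finset.Icc 1 n,
            T l (aisPath (n + 1) s q l) (aisPath (n + 1) s q (l + 1))) *
          (∏ l ∈ Finset.Icc 1 (n + 1),
            p l (aisPath (n + 1) s q l) / p (l - 1) (aisPath (n + 1) s q l))) =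
      p (n + 1) s := by
  induction n generalizing s with
  | zero =>
    have : Subsingleton (Fin (0 + 1 - 1) → S) := ⟨fun a b => funext fun i => i.elim0⟩
    rw [Fintype.sum_subsingleton _ (fun _ : Fin (0 + 1 - 1) => s)]
    have h0 : aisPath (0 + 1) s (fun _ : Fin (0 + 1 - 1) => s) 1 = s := aisPath_self 1 s _
    simp only [Finset.Icc_self, Finset.Icc_eq_empty_of_lt (by norm_num : (0:ℕ) < 1),
      Finset.prod_empty, Finset.prod_singleton, h0]
    have h00 := (hp 0 (by omega) s).ne'
    field_simp
  | succ n ih =>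
    -- split off the last intermediate state
    have hsum :
        ∑ q : Fin (n + 2 - 1) → S,
          (p 0 (aisPath (n + 2) s q 1) *
            (∏ l ∈ Finset.Icc 1 (n + 1),
              T l (aisPath (n + 2) s q l) (aisPath (n + 2) s q (l + 1))) *
            (∏ l ∈ Finset.Icc 1 (n + 2),
              p l (aisPath (n + 2) s q l) / p (l - 1) (aisPath (n + 2) s q l)))
          = ∑ x : S × (Fin n → S),
              (fun q : Fin (n + 2 - 1) → S =>
                (p 0 (aisPath (n + 2) s q 1) *
                  (∏ l ∈ Finset.Icc 1 (n + 1),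
                    T l (aisPath (n + 2) s q l) (aisPath (n + 2) s q (l + 1))) *
                  (∏ l ∈ Finset.Icc 1 (n + 2),
                    p l (aisPath (n + 2) s q l) / p (l - 1) (aisPath (n + 2) s q l))))
                (Fin.snoc x.2 x.1) := by
      exact (Equiv.sum_comp (Fin.snocEquiv (fun _ : Fin (n+1) => S)) _).symm
    rw [hsum, Fintype.sum_prod_type]
    have key : ∀ t : S, ∀ q' : Fin (n + 1 - 1) → S,
        (p 0 (aisPath (n + 2) s (Fin.snoc (α := fun _ : Fin (n+1) => S) q' t) 1) *
          (∏ l ∈ Finset.Icc 1 (n + 1),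
            T l (aisPath (n + 2) s (Fin.snoc (α := fun _ : Fin (n+1) => S) q' t) l)
              (aisPath (n + 2) s (Fin.snoc (α := fun _ : Fin (n+1) => S) q' t) (l + 1))) *
          (∏ l ∈ Finset.Icc 1 (n + 2),
            p l (aisPath (n + 2) s (Fin.snoc (α := fun _ : Fin (n+1) => S) q' t) l) /
              p (l - 1) (aisPath (n + 2) s (Fin.snoc (α := fun _ : Fin (n+1) => S) q' t) l)))
        = (p 0 (aisPath (n + 1) t q' 1) *
            (∏ l ∈ Finset.Icc 1 n,
              T l (aisPath (n + 1) t q' l) (aisPath (n + 1) t q' (l + 1))) *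
            (∏ l ∈ Finset.Icc 1 (n + 1),
              p l (aisPath (n + 1) t q' l) / p (l - 1) (aisPath (n + 1) t q' l)))
          * (T (n + 1) t s * (p (n + 2) s / p (n + 1) s)) := by
      intro t q'
      have hAB : ∀ l ≤ n + 1,
          aisPath (n + 2) s (Fin.snoc (α := fun _ : Fin (n+1) => S) q' t) l
            = aisPath (n + 1) t q' l := fun l hl => aisPath_snoc_eq s t q' l hl
      have hAtop : aisPath (n + 2) s (Fin.snoc (α := fun _ : Fin (n+1) => S) q' t) (n + 2) = s :=
        aisPath_self (n + 2) s _
      have hBtop : aisPath (n + 1) t q' (n + 1) = t := aisPath_self (n + 1) t q'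
      have h1 : (∏ l ∈ Finset.Icc 1 (n + 1),
            T l (aisPath (n + 2) s (Fin.snoc (α := fun _ : Fin (n+1) => S) q' t) l)
              (aisPath (n + 2) s (Fin.snoc (α := fun _ : Fin (n+1) => S) q' t) (l + 1)))
          = (∏ l ∈ Finset.Icc 1 n,
              T l (aisPath (n + 1) t q' l) (aisPath (n + 1) t q' (l + 1))) * T (n + 1) t s := by
        have step : (∏ l ∈ Finset.Icc 1 (n + 1),
              T l (aisPath (n + 2) s (Fin.snoc (α := fun _ : Fin (n+1) => S) q' t) l)
                (aisPath (n + 2) s (Fin.snoc (α := fun _ : Fin (n+1) => S) q' t) (l + 1)))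
            = (∏ l ∈ Finset.Icc 1 n,
                T l (aisPath (n + 2) s (Fin.snoc (α := fun _ : Fin (n+1) => S) q' t) l)
                  (aisPath (n + 2) s (Fin.snoc (α := fun _ : Fin (n+1) => S) q' t) (l + 1)))
              * T (n + 1) (aisPath (n + 2) s (Fin.snoc (α := fun _ : Fin (n+1) => S) q' t) (n + 1))
                  (aisPath (n + 2) s (Fin.snoc (α := fun _ : Fin (n+1) => S) q' t) (n + 2)) :=
          Finset.prod_Icc_succ_top (by omega) _
        rw [step, hAtop, hAB (n + 1) le_rfl, hBtop]
        congr 1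
        refine Finset.prod_congr rfl fun l hl => ?_
        simp only [Finset.mem_Icc] at hl
        rw [hAB l (by omega), hAB (l + 1) (by omega)]
      have h2 : (∏ l ∈ Finset.Icc 1 (n + 2),
            p l (aisPath (n + 2) s (Fin.snoc (α := fun _ : Fin (n+1) => S) q' t) l) /
              p (l - 1) (aisPath (n + 2) s (Fin.snoc (α := fun _ : Fin (n+1) => S) q' t) l))
          = (∏ l ∈ Finset.Icc 1 (n + 1),
              p l (aisPath (n + 1) t q' l) / p (l - 1) (aisPath (n + 1) t q' l))
            * (p (n + 2) s / p (n + 1) s) := by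
        have step : (∏ l ∈ Finset.Icc 1 (n + 2),
              p l (aisPath (n + 2) s (Fin.snoc (α := fun _ : Fin (n+1) => S) q' t) l) /
                p (l - 1) (aisPath (n + 2) s (Fin.snoc (α := fun _ : Fin (n+1) => S) q' t) l))
            = (∏ l ∈ Finset.Icc 1 (n + 1),
                p l (aisPath (n + 2) s (Fin.snoc (α := fun _ : Fin (n+1) => S) q' t) l) /
                  p (l - 1) (aisPath (n + 2) s (Fin.snoc (α := fun _ : Fin (n+1) => S) q' t) l))
              * (p (n + 2) (aisPath (n + 2) s (Fin.snoc (α := fun _ : Fin (n+1) => S) q' t) (n + 2)) /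
                  p (n + 1) (aisPath (n + 2) s (Fin.snoc (α := fun _ : Fin (n+1) => S) q' t) (n + 2))) :=
          Finset.prod_Icc_succ_top (by omega) _
        rw [step, hAtop]
        congr 1
        refine Finset.prod_congr rfl fun l hl => ?_
        simp only [Finset.mem_Icc] at hl
        rw [hAB l hl.2]
      rw [h1, h2, hAB 1 (by omega)]
      ring
    have final : ∑ t : S, ∑ q' : Fin (n + 1 - 1) → S,
        (p 0 (aisPath (n + 2) s (Fin.snoc (α := fun _ : Fin (n+1) => S) q' t) 1) *
          (∏ l ∈ Finset.Icc 1 (n + 1),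
            T l (aisPath (n + 2) s (Fin.snoc (α := fun _ : Fin (n+1) => S) q' t) l)
              (aisPath (n + 2) s (Fin.snoc (α := fun _ : Fin (n+1) => S) q' t) (l + 1))) *
          (∏ l ∈ Finset.Icc 1 (n + 2),
            p l (aisPath (n + 2) s (Fin.snoc (α := fun _ : Fin (n+1) => S) q' t) l) /
              p (l - 1) (aisPath (n + 2) s (Fin.snoc (α := fun _ : Fin (n+1) => S) q' t) l)))
        = p (n + 2) s := by
      calc ∑ t : S, ∑ q' : Fin (n + 1 - 1) → S,
          (p 0 (aisPath (n + 2) s (Fin.snoc (α := fun _ : Fin (n+1) => S) q' t) 1) *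
            (∏ l ∈ Finset.Icc 1 (n + 1),
              T l (aisPath (n + 2) s (Fin.snoc (α := fun _ : Fin (n+1) => S) q' t) l)
                (aisPath (n + 2) s (Fin.snoc (α := fun _ : Fin (n+1) => S) q' t) (l + 1))) *
            (∏ l ∈ Finset.Icc 1 (n + 2),
              p l (aisPath (n + 2) s (Fin.snoc (α := fun _ : Fin (n+1) => S) q' t) l) /
                p (l - 1) (aisPath (n + 2) s (Fin.snoc (α := fun _ : Fin (n+1) => S) q' t) l)))
          = ∑ t : S, p (n + 1) t * (T (n + 1) t s * (p (n + 2) s / p (n + 1) s)) := by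
            refine Finset.sum_congr rfl fun t _ => ?_
            rw [Finset.sum_congr rfl fun q' _ => key t q', ← Finset.sum_mul]
            rw [ih (fun l hl => hp l (by omega)) (fun l h1 h2 => hTrow l h1 (by omega))
              (fun l h1 h2 => hdb l h1 (by omega)) t]
        _ = ∑ t : S, p (n + 1) s * T (n + 1) s t * (p (n + 2) s / p (n + 1) s) := by
            refine Finset.sum_congr rfl fun t _ => ?_
            rw [← mul_assoc, hdb (n + 1) (by omega) (by omega) t s]
        _ = p (n + 2) s := by
            rw [← Finset.sum_mul, ← Finset.mul_sum, hTrow (n + 1) (by omega) (by omega) s]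
            have := (hp (n + 1) (by omega) s).ne'
            field_simp
    exact final

/-- Correctness of annealed importance sampling: the weighted marginal
of the final coordinate equals the target distribution `p_L`. -/
theorem ais_weighted_marginal
    {S : Type*} [Fintype S] [DecidableEq S] (L : ℕ) (hL : 1 ≤ L)
    (p : ℕ → S → ℝ) (hp : ∀ l ≤ L, ∀ s : S, 0 < p l s)
    (hp0 : ∑ s : S, p 0 s = 1)
    (T : ℕ → S → S → ℝ)
    (hTnn : ∀ l, 1 ≤ l → l ≤ L - 1 → ∀ s t : S, 0 ≤ T l s t)
    (hTrow : ∀ l, 1 ≤ l → l ≤ L - 1 → ∀ s : S, ∑ t : S, T l s t = 1)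
    (hdb : ∀ l, 1 ≤ l → l ≤ L - 1 → ∀ s t : S, p l s * T l s t = p l t * T l t s)
    (s : S) :
    ∑ q : Fin (L - 1) → S,
        (p 0 (aisPath L s q 1) *
          (∏ l ∈ Finset.Icc 1 (L - 1),
            T l (aisPath L s q l) (aisPath L s q (l + 1))) *
          (∏ l ∈ Finset.Icc 1 L,
            p l (aisPath L s q l) / p (l - 1) (aisPath L s q l))) =
      p L s := by
  obtain ⟨n, rfl⟩ : ∃ n, L = n + 1 := ⟨L - 1, by omega⟩
  have hn : n + 1 - 1 = n := by omega
  simp only [hn] at hTrow hdb ⊢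
  exact ais_aux n p hp T hTrow hdb s
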